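/- Let (F^m) be a sequence of filtrations on [0,T] and F a filtration such that F^m_t converges weakly to F_t for every t ∈ [0,T]. Define the filtration F̃ by F̃_t = ⋁_m F^m_t. If X is a càdlàg process adapted to F that is a semimartingale with respect to F̃, then X is a semimartingale with respect to F. -/

import Mathlib

/-!
Truncate the conditional expectation of each coefficient `h n i` of an `F`-elementary integrand
given `Fm m (t n i)` at the uniform bound of `h n`. The result is `F̃`-predictable, and weak
convergence of σ-algebras, which passes from indicators to simple functions by linearity and to
bounded functions because conditional expectation is an `L¹`-contraction, makes it converge in
probability to `h n i` as `m → ∞`. Elementary integrals against the fixed increments of `X`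
follow, and a diagonal choice `m = m n` yields `F̃`-integrands to which the `F̃`-semimartingale
property applies and whose integrals are asymptotically those of `h n`.
-/

open MeasureTheory Filter

/-- A function is càdlàg on `[0,T]`. -/
def IsCadlagOn (T : ℝ) (f : ℝ → ℝ) : Prop :=
  (∀ t ∈ Set.Ico 0 T, Filter.Tendsto f (nhdsWithin t (Set.Ioi t)) (nhds (f t))) ∧
  (∀ t ∈ Set.Ioc 0 T, ∃ l : ℝ, Filter.Tendsto f (nhdsWithin t (Set.Iio t)) (nhds l))

/-- Weak convergence of σ-algebras. -/
def WeakConvSigma {Ω : Type*} {mΩ : MeasurableSpace Ω} (μ : Measure Ω)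
    (A : ℕ → MeasurableSpace Ω) (Alim : MeasurableSpace Ω) : Prop :=
  ∀ B : Set Ω, MeasurableSet[Alim] B →
    TendstoInMeasure μ
      (fun n => μ[Set.indicator B (fun _ => (1 : ℝ)) | A n]) atTop
      (Set.indicator B (fun _ => (1 : ℝ)))

/-- The Bichteler–Dellacherie semimartingale property of a process `X` on `[0,T]`
with respect to a filtration `F`: for every sequence of bounded elementary
`F`-predictable processes (given by partition points `t n` in `[0,T]` and
`F (t n i)`-measurable coefficients `h n i`) converging uniformly to zero, the
elementary stochastic integrals converge to zero in probability. -/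
def BDSemimartingale {Ω : Type*} {mΩ : MeasurableSpace Ω} (μ : Measure Ω) (T : ℝ)
    (F : ℝ → MeasurableSpace Ω) (X : ℝ → Ω → ℝ) : Prop :=
  ∀ (k : ℕ → ℕ) (t : (n : ℕ) → Fin (k n + 1) → ℝ) (h : (n : ℕ) → Fin (k n) → Ω → ℝ),
    (∀ n, Monotone (t n)) → (∀ n i, t n i ∈ Set.Icc (0:ℝ) T) →
    (∀ n (i : Fin (k n)), StronglyMeasurable[F (t n i.castSucc)] (h n i)) →
    (∃ C : ℝ, ∀ n i ω, |h n i ω| ≤ C) →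
    (∀ ε > (0:ℝ), ∃ N, ∀ n ≥ N, ∀ i ω, |h n i ω| ≤ ε) →
    TendstoInMeasure μ
      (fun n ω => ∑ i : Fin (k n), h n i ω * (X (t n i.succ) ω - X (t n i.castSucc) ω))
      atTop (fun _ => (0:ℝ))


open scoped NNReal ENNReal Topology

namespace MeasureTheory

variable {Ω ι E : Type*} {mΩ : MeasurableSpace Ω} {μ : Measure Ω} {l : Filter ι}

theorem tendstoInMeasure_of_forall_approx [PseudoEMetricSpace E] {f : ι → Ω → E} {g : Ω → E}
    (h : ∀ ε > 0, ∀ δ > 0, ∃ (u : ι → Ω → E) (v : Ω → E), TendstoInMeasure μ u l v ∧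
      (∀ i, μ {x | ε ≤ edist (f i x) (u i x)} ≤ δ) ∧ μ {x | ε ≤ edist (v x) (g x)} ≤ δ) :
    TendstoInMeasure μ f l g := by
  intro ε hε
  refine ENNReal.tendsto_nhds_zero.2 fun δ hδ => ?_
  have third_pos : ∀ {a : ℝ≥0∞}, 0 < a → 0 < a / 3 := fun ha =>
    ENNReal.div_pos ha.ne' ENNReal.ofNat_ne_top
  obtain ⟨u, v, huv, hfu, hvg⟩ := h (ε / 3) (third_pos hε) (δ / 3) (third_pos hδ)
  filter_upwards [ENNReal.tendsto_nhds_zero.1 (huv (ε / 3) (third_pos hε)) (δ / 3)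
    (third_pos hδ)] with i hi
  have hsub : {x | ε ≤ edist (f i x) (g x)} ⊆ {x | ε / 3 ≤ edist (f i x) (u i x)} ∪
      {x | ε / 3 ≤ edist (u i x) (v x)} ∪ {x | ε / 3 ≤ edist (v x) (g x)} := by
    intro x hx
    by_contra hx'
    simp only [Set.mem_union, Set.mem_ofPred_eq, not_or, not_le] at hx'
    obtain ⟨⟨h₁, h₂⟩, h₃⟩ := hx'
    refine hx.not_gt ((edist_triangle4 _ (u i x) (v x) _).trans_lt ?_)
    simpa only [ENNReal.add_thirds] using ENNReal.add_lt_add (ENNReal.add_lt_add h₁ h₂) h₃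
  calc μ {x | ε ≤ edist (f i x) (g x)}
      ≤ μ {x | ε / 3 ≤ edist (f i x) (u i x)} + μ {x | ε / 3 ≤ edist (u i x) (v x)} +
          μ {x | ε / 3 ≤ edist (v x) (g x)} :=
        (measure_mono hsub).trans <| (measure_union_le _ _).trans <|
          add_le_add_left (measure_union_le _ _) _
    _ ≤ δ / 3 + δ / 3 + δ / 3 := add_le_add (add_le_add (hfu i) hi) hvg
    _ = δ := ENNReal.add_thirds δ

theorem TendstoInMeasure.of_diagonal [PseudoEMetricSpace E] {f : ℕ → Ω → E} {g : Ω → E}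
    {u : ℕ → ℕ → Ω → E} (hu : ∀ n, TendstoInMeasure μ (u n) atTop (f n))
    (hdiag : ∀ m : ℕ → ℕ, TendstoInMeasure μ (fun n => u n (m n)) atTop g) :
    TendstoInMeasure μ f atTop g := by
  refine tendstoInMeasure_of_forall_approx fun ε hε δ hδ => ?_
  have hm : ∀ n, ∃ m, μ {x | ε ≤ edist (f n x) (u n m x)} ≤ δ := fun n => by
    simpa only [edist_comm] using (ENNReal.tendsto_nhds_zero.1 (hu n ε hε) δ hδ).exists
  choose m hm using hm
  refine ⟨fun n => u n (m n), g, hdiag m, hm, ?_⟩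
  simp [hε.not_ge]

theorem TendstoInMeasure.comp_lipschitzWith [PseudoEMetricSpace E] {F : Type*}
    [PseudoEMetricSpace F] {φ : E → F} {K : ℝ≥0} (hφ : LipschitzWith K φ) {f : ι → Ω → E}
    {g : Ω → E} (hfg : TendstoInMeasure μ f l g) :
    TendstoInMeasure μ (fun i x => φ (f i x)) l (fun x => φ (g x)) := by
  intro ε hε
  refine tendsto_of_tendsto_of_tendsto_of_le_of_le tendsto_const_nhds
    (hfg (ε / K) (ENNReal.div_pos hε.ne' ENNReal.coe_ne_top)) (fun _ => bot_le)
    fun i => measure_mono fun x hx => ?_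
  exact ENNReal.div_le_of_le_mul' (hx.trans (hφ _ _))

theorem TendstoInMeasure.add [SeminormedAddCommGroup E] {f f' : ι → Ω → E} {g g' : Ω → E}
    (hf : TendstoInMeasure μ f l g) (hf' : TendstoInMeasure μ f' l g') :
    TendstoInMeasure μ (fun i x => f i x + f' i x) l (fun x => g x + g' x) := by
  intro ε hε
  have hε₂ : 0 < ε / 2 := ENNReal.half_pos hε.ne'
  refine tendsto_of_tendsto_of_tendsto_of_le_of_le tendsto_const_nhds
    (by simpa using (hf _ hε₂).add (hf' _ hε₂)) (fun _ => bot_le)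
    fun i => (measure_mono fun x hx => ?_).trans (measure_union_le _ _)
  by_contra hx'
  simp only [Set.mem_union, Set.mem_ofPred_eq, not_or, not_le] at hx'
  refine hx.not_gt ((edist_add_add_le _ _ _ _).trans_lt ?_)
  simpa only [ENNReal.add_halves] using ENNReal.add_lt_add hx'.1 hx'.2

theorem TendstoInMeasure.finset_sum [SeminormedAddCommGroup E] {κ : Type*} (s : Finset κ)
    {f : κ → ι → Ω → E} {g : κ → Ω → E} (hf : ∀ j ∈ s, TendstoInMeasure μ (f j) l (g j)) :
    TendstoInMeasure μ (fun i x => ∑ j ∈ s, f j i x) l (fun x => ∑ j ∈ s, g j x) := by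
  classical
  induction s using Finset.induction_on with
  | empty => intro ε hε; simpa [hε.not_ge] using tendsto_const_nhds
  | insert a s ha ih =>
    simp only [Finset.sum_insert ha]
    exact (hf a (Finset.mem_insert_self a s)).add
      (ih fun j hj => hf j (Finset.mem_insert_of_mem hj))

theorem tendsto_measure_natCast_lt_enorm [IsFiniteMeasure μ] [NormedAddCommGroup E]
    {Y : Ω → E} (hY : AEStronglyMeasurable Y μ) :
    Tendsto (fun M : ℕ => μ {x | (M : ℝ≥0∞) < ‖Y x‖ₑ}) atTop (𝓝 0) := by
  have hempty : (⋂ M : ℕ, {x | (M : ℝ≥0∞) < ‖Y x‖ₑ}) = ∅ := by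
    ext x
    simpa using (ENNReal.exists_nat_gt (enorm_ne_top (x := Y x))).imp fun _ => le_of_lt
  have h := tendsto_measure_iInter_atTop (μ := μ) (s := fun M : ℕ => {x | (M : ℝ≥0∞) < ‖Y x‖ₑ})
    (fun M => nullMeasurableSet_lt aemeasurable_const hY.enorm)
    (fun a b hab x (hx : (b : ℝ≥0∞) < ‖Y x‖ₑ) =>
      show (a : ℝ≥0∞) < ‖Y x‖ₑ from (Nat.mono_cast hab).trans_lt hx)
    ⟨0, measure_ne_top μ _⟩
  rwa [hempty, measure_empty] at h

theorem TendstoInMeasure.mul_right [IsFiniteMeasure μ] {R : Type*} [NonUnitalNormedRing R]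
    {f : ι → Ω → R} {g Y : Ω → R} (hY : AEStronglyMeasurable Y μ)
    (hfg : TendstoInMeasure μ f l g) :
    TendstoInMeasure μ (fun i x => f i x * Y x) l (fun x => g x * Y x) := by
  intro ε hε
  refine ENNReal.tendsto_nhds_zero.2 fun δ hδ => ?_
  obtain ⟨M, hM, hM₁⟩ := ((ENNReal.tendsto_nhds_zero.1 (tendsto_measure_natCast_lt_enorm hY)
    (δ / 2) (ENNReal.half_pos hδ.ne')).and (eventually_ge_atTop 1)).exists
  have hM₀ : (M : ℝ≥0∞) ≠ 0 := by exact_mod_cast (Nat.one_le_iff_ne_zero.1 hM₁)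
  filter_upwards [ENNReal.tendsto_nhds_zero.1 (hfg (ε / M) (ENNReal.div_pos hε.ne'
    (ENNReal.natCast_ne_top M))) (δ / 2) (ENNReal.half_pos hδ.ne')] with i hi
  have hsub : {x | ε ≤ edist (f i x * Y x) (g x * Y x)} ⊆
      {x | (M : ℝ≥0∞) < ‖Y x‖ₑ} ∪ {x | ε / M ≤ edist (f i x) (g x)} := by
    intro x hx
    by_contra hx'
    simp only [Set.mem_union, Set.mem_ofPred_eq, not_or, not_le, not_lt] at hx'
    have hprod : edist (f i x * Y x) (g x * Y x) ≤ edist (f i x) (g x) * ‖Y x‖ₑ := by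
      simp only [edist_eq_enorm_sub, ← sub_mul, enorm_eq_nnnorm]
      exact_mod_cast nnnorm_mul_le _ _
    refine hx.not_gt (hprod.trans_lt ?_)
    calc edist (f i x) (g x) * ‖Y x‖ₑ ≤ edist (f i x) (g x) * M := by gcongr; exact hx'.1
      _ < ε := ENNReal.mul_lt_of_lt_div hx'.2
  calc μ {x | ε ≤ edist (f i x * Y x) (g x * Y x)}
      ≤ μ {x | (M : ℝ≥0∞) < ‖Y x‖ₑ} + μ {x | ε / M ≤ edist (f i x) (g x)} :=
        (measure_mono hsub).trans (measure_union_le _ _)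
    _ ≤ δ / 2 + δ / 2 := add_le_add hM hi
    _ = δ := ENNReal.add_halves δ

theorem StronglyMeasurable.tendsto_eLpNorm_one_sub_approxBounded [IsFiniteMeasure μ]
    [NormedAddCommGroup E] [NormedSpace ℝ E] {m : MeasurableSpace Ω} (hm : m ≤ mΩ) {f : Ω → E}
    (hf : StronglyMeasurable[m] f) {C : ℝ} (hC : ∀ x, ‖f x‖ ≤ C) :
    Tendsto (fun k => eLpNorm (f - ⇑(hf.approxBounded C k)) 1 μ) atTop (𝓝 0) := by
  have h := tendsto_lintegral_norm_of_dominated_convergence (μ := μ) (bound := fun _ => C)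
    (fun k => ((hf.approxBounded C k).stronglyMeasurable.mono hm).aestronglyMeasurable)
    (hasFiniteIntegral_const C)
    (fun k => ae_of_all _ fun x => hf.norm_approxBounded_le ((norm_nonneg _).trans (hC x)) k x)
    (ae_of_all _ fun x => hf.tendsto_approxBounded_of_norm_le (hC x))
  simpa only [eLpNorm_one_eq_lintegral_enorm, Pi.sub_apply, ofReal_norm, enorm_sub_rev] using h

theorem meas_ge_le_inv_mul_eLpNorm_one [NormedAddCommGroup E] {φ : Ω → E}
    (hφ : AEStronglyMeasurable φ μ) {ε : ℝ≥0∞} (hε : ε ≠ 0) :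
    μ {x | ε ≤ ‖φ x‖ₑ} ≤ ε⁻¹ * eLpNorm φ 1 μ := by
  simpa using meas_ge_le_mul_pow_eLpNorm_enorm μ one_ne_zero ENNReal.one_ne_top hφ hε (by simp)

end MeasureTheory

namespace WeakConvSigma

variable {Ω : Type*} {mΩ : MeasurableSpace Ω} {μ : Measure Ω} [IsFiniteMeasure μ]
  {G : ℕ → MeasurableSpace Ω} {Flim : MeasurableSpace Ω}

theorem tendstoInMeasure_condExp_simpleFunc (hconv : WeakConvSigma μ G Flim) (hFlim : Flim ≤ mΩ)
    (s : @SimpleFunc Ω Flim ℝ) : TendstoInMeasure μ (fun m => μ[s | G m]) atTop s := by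
  have integrable : ∀ s' : @SimpleFunc Ω Flim ℝ, Integrable s' μ := fun s' =>
    have ⟨C, hC⟩ := s'.exists_forall_norm_le
    .of_bound (s'.stronglyMeasurable.mono hFlim).aestronglyMeasurable C (ae_of_all _ hC)
  induction s using SimpleFunc.induction with
  | @const c B hB =>
    have hind : ⇑(SimpleFunc.piecewise B hB (SimpleFunc.const Ω c) (SimpleFunc.const Ω 0)) =
        c • B.indicator fun _ => (1 : ℝ) := by
      ext x; by_cases hx : x ∈ B <;> simp [hx]
    rw [hind]
    refine ((hconv B hB).comp_lipschitzWith (lipschitzWith_smul c)).congr_left fun m => ?_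
    exact (condExp_smul c _ _).symm
  | @add s₁ s₂ _ h₁ h₂ =>
    refine (h₁.add h₂).congr_left fun m => ?_
    rw [SimpleFunc.coe_add]
    exact (condExp_add (integrable s₁) (integrable s₂) _).symm

theorem tendstoInMeasure_condExp (hconv : WeakConvSigma μ G Flim) (hFlim : Flim ≤ mΩ)
    {f : Ω → ℝ} (hf : StronglyMeasurable[Flim] f) {C : ℝ} (hC : ∀ x, |f x| ≤ C) :
    TendstoInMeasure μ (fun m => μ[f | G m]) atTop f := by
  refine tendstoInMeasure_of_forall_approx fun ε hε δ hδ => ?_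
  set s : ℕ → Ω → ℝ := fun k => hf.approxBounded C k
  have hf_int : Integrable f μ := .of_bound (hf.mono hFlim).aestronglyMeasurable C (ae_of_all _ hC)
  have hs_int : ∀ k, Integrable (s k) μ := fun k => .of_bound
    (((hf.approxBounded C k).stronglyMeasurable).mono hFlim).aestronglyMeasurable C
    (ae_of_all _ fun x => hf.norm_approxBounded_le ((abs_nonneg _).trans (hC x)) k x)
  have hs_lim := ENNReal.Tendsto.const_mul
    (hf.tendsto_eLpNorm_one_sub_approxBounded (μ := μ) hFlim hC)
    (Or.inr (ENNReal.inv_ne_top.2 hε.ne'))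
  obtain ⟨k, hk⟩ := (hs_lim.eventually (ge_mem_nhds (by simpa using hδ))).exists
  refine ⟨fun m => μ[s k | G m], s k,
    hconv.tendstoInMeasure_condExp_simpleFunc hFlim (hf.approxBounded C k), fun m => ?_, ?_⟩
  · calc μ {x | ε ≤ edist (μ[f | G m] x) (μ[s k | G m] x)}
        = μ {x | ε ≤ ‖μ[f - s k | G m] x‖ₑ} := measure_congr <|
          (condExp_sub hf_int (hs_int k) (G m)).mono fun x hx => by
            change (ε ≤ _) = (ε ≤ _)
            rw [hx, Pi.sub_apply, edist_eq_enorm_sub]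
      _ ≤ ε⁻¹ * eLpNorm (μ[f - s k | G m]) 1 μ :=
          meas_ge_le_inv_mul_eLpNorm_one integrable_condExp.aestronglyMeasurable hε.ne'
      _ ≤ ε⁻¹ * eLpNorm (f - s k) 1 μ := by gcongr; exact eLpNorm_condExp_le_eLpNorm _ le_rfl
      _ ≤ δ := hk
  · calc μ {x | ε ≤ edist (s k x) (f x)}
        = μ {x | ε ≤ ‖(f - s k) x‖ₑ} := by simp [edist_eq_enorm_sub, enorm_sub_rev]
      _ ≤ ε⁻¹ * eLpNorm (f - s k) 1 μ :=
          meas_ge_le_inv_mul_eLpNorm_one (hf_int.sub (hs_int k)).aestronglyMeasurable hε.ne'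
      _ ≤ δ := hk

theorem tendstoInMeasure_projIcc_condExp (hconv : WeakConvSigma μ G Flim) (hFlim : Flim ≤ mΩ)
    {f : Ω → ℝ} (hf : StronglyMeasurable[Flim] f) {b : ℝ} (hb : 0 ≤ b) (hfb : ∀ x, |f x| ≤ b) :
    TendstoInMeasure μ (fun m x => (Set.projIcc (-b) b (neg_le_self hb) (μ[f | G m] x) : ℝ))
      atTop f := by
  refine ((hconv.tendstoInMeasure_condExp hFlim hf hfb).comp_lipschitzWith
    ((LipschitzWith.subtype_val _).comp (LipschitzWith.projIcc _))).congr_right ?_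
  exact ae_of_all _ fun x => congrArg Subtype.val (Set.projIcc_of_mem _ (abs_le.1 (hfb x)))

end WeakConvSigma

theorem exists_bound_tendsto_zero {κ : ℕ → Type*} {u : (n : ℕ) → κ n → ℝ}
    (hbdd : ∃ C, ∀ n x, |u n x| ≤ C) (hu : ∀ ε > (0:ℝ), ∃ N, ∀ n ≥ N, ∀ x, |u n x| ≤ ε) :
    ∃ b : ℕ → ℝ, (∀ n, 0 ≤ b n) ∧ (∀ n x, |u n x| ≤ b n) ∧ (∃ C, ∀ n, b n ≤ C) ∧
      ∀ ε > (0:ℝ), ∃ N, ∀ n ≥ N, b n ≤ ε := by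
  obtain ⟨C, hC⟩ := hbdd
  refine ⟨fun n => ⨆ x, |u n x|, fun n => Real.iSup_nonneg fun x => abs_nonneg _,
    fun n x => le_ciSup ⟨C, Set.forall_mem_range.2 (hC n)⟩ x,
    ⟨max C 0, fun n => Real.iSup_le (fun x => (hC n x).trans (le_max_left _ _))
      (le_max_right _ _)⟩,
    fun ε hε => (hu ε hε).imp fun N hN n hn => Real.iSup_le (hN n hn) hε.le⟩

theorem semimartingale_of_sup_semimartingale_general
    {Ω : Type*} {H : MeasurableSpace Ω} (μ : Measure Ω) [IsProbabilityMeasure μ]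
    (T : ℝ)
    (Fm : ℕ → ℝ → MeasurableSpace Ω) (F : ℝ → MeasurableSpace Ω)
    (hFle : ∀ t, F t ≤ H)
    (hconv : ∀ t ∈ Set.Icc (0:ℝ) T, WeakConvSigma μ (fun m => Fm m t) (F t))
    (X : ℝ → Ω → ℝ)
    (hXadapted : ∀ t, StronglyMeasurable[F t] (X t))
    (hXsemimg : BDSemimartingale μ T (fun t => ⨆ m, Fm m t) X) :
    BDSemimartingale μ T F X := by
  intro k t h ht_mono ht_mem h_meas ⟨C, hC⟩ h_unif
  obtain ⟨b, hb_nonneg, hhb, ⟨B, hbB⟩, hb_lim⟩ :=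
    exists_bound_tendsto_zero (u := fun n (p : Fin (k n) × Ω) => h n p.1 p.2)
      ⟨C, fun n p => hC n p.1 p.2⟩
      fun ε hε => (h_unif ε hε).imp fun N hN n hn p => hN n hn p.1 p.2
  let g (n m : ℕ) (i : Fin (k n)) (ω : Ω) : ℝ :=
    Set.projIcc (-b n) (b n) (neg_le_self (hb_nonneg n)) (μ[h n i | Fm m (t n i.castSucc)] ω)
  have hg_le (n m : ℕ) (i : Fin (k n)) (ω : Ω) : |g n m i ω| ≤ b n :=
    abs_le.2 (Set.projIcc _ _ _ _).2
  refine TendstoInMeasure.of_diagonal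
    (u := fun n m ω => ∑ i, g n m i ω * (X (t n i.succ) ω - X (t n i.castSucc) ω))
    (fun n => TendstoInMeasure.finset_sum _ fun i _ => TendstoInMeasure.mul_right ?_
      ((hconv _ (ht_mem n _)).tendstoInMeasure_projIcc_condExp (hFle _) (h_meas n i)
        (hb_nonneg n) fun ω => hhb n (i, ω)))
    fun m => hXsemimg k t (fun n i => g n (m n) i) ht_mono ht_mem (fun n i => ?_)
      ⟨B, fun n i ω => (hg_le n _ i ω).trans (hbB n)⟩
      fun ε hε => (hb_lim ε hε).imp fun N hN n hn i ω => (hg_le n _ i ω).trans (hN n hn)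
  · exact (((hXadapted _).mono (hFle _)).sub ((hXadapted _).mono (hFle _))).aestronglyMeasurable
  · exact (continuous_subtype_val.comp continuous_projIcc).comp_stronglyMeasurable
      (stronglyMeasurable_condExp.mono (le_iSup (fun m => Fm m _) (m n)))

/-- Let `Fm` be a sequence of filtrations and `F` a filtration with `Fm m t → F t`
weakly for every `t ∈ [0,T]`, and let `F̃ t = ⨆ m, Fm m t`.  If `X` is a càdlàg
process adapted to `F` which is a semimartingale with respect to `F̃`, then `X` is a
semimartingale with respect to `F`. -/
theorem semimartingale_of_sup_semimartingale
    {Ω : Type*} {H : MeasurableSpace Ω} (μ : Measure Ω) [IsProbabilityMeasure μ]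
    (T : ℝ) (hT : 0 < T)
    (Fm : ℕ → ℝ → MeasurableSpace Ω) (F : ℝ → MeasurableSpace Ω)
    (hFmmono : ∀ m, Monotone (Fm m)) (hFmono : Monotone F)
    (hFmle : ∀ m t, Fm m t ≤ H) (hFle : ∀ t, F t ≤ H)
    (hconv : ∀ t ∈ Set.Icc (0:ℝ) T, WeakConvSigma μ (fun m => Fm m t) (F t))
    (X : ℝ → Ω → ℝ)
    (hXcadlag : ∀ ω, IsCadlagOn T (fun t => X t ω))
    (hXadapted : ∀ t, StronglyMeasurable[F t] (X t))
    (hXsemimg : BDSemimartingale μ T (fun t => ⨆ m, Fm m t) X) :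
    BDSemimartingale μ T F X :=
  semimartingale_of_sup_semimartingale_general μ T Fm F hFle hconv X hXadapted hXsemimg
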